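/- arXiv:2506.04368 — 4 statements merged into one kernel-verified Lean document; each statement's English description precedes it below -/
import Mathlib

section
/- For every real constant Φ with 0 < Φ ≤ 1/10, there exist an integer c ≥ 1, a real constant a ≥ 1, and a threshold N₀ ∈ ℕ such that for every integer n ≥ N₀ and every integer s with 1 ≤ s ≤ n/2, one has (n choose s) · (c·s choose ⌈(1−Φ)·c·s⌉) · (a·s/n)^((1−Φ)·c·s) ≤ 1/n², where the last factor uses real exponentiation. -/
set_option maxHeartbeats 1000000

open Real

/-- `n choose k ≤ exp (k * (1 + log (n / k)))` for `1 ≤ k ≤ n`. -/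
lemma choose_le_exp_aux (n k : ℕ) (h1 : 1 ≤ k) (h2 : k ≤ n) :
    (n.choose k : ℝ) ≤ Real.exp ((k : ℝ) * (1 + Real.log ((n : ℝ) / (k : ℝ)))) := by
  have hk0 : (0 : ℝ) < (k : ℝ) := by exact_mod_cast h1
  have hn0 : (0 : ℝ) < (n : ℝ) := lt_of_lt_of_le hk0 (by exact_mod_cast h2)
  have hfac : (0 : ℝ) < (k.factorial : ℝ) := by exact_mod_cast k.factorial_pos
  have h3 : (n.choose k : ℝ) ≤ (n : ℝ) ^ k / k.factorial := Nat.choose_le_pow_div k n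
  have h4 : (k : ℝ) ^ k / k.factorial ≤ Real.exp k := Real.pow_div_factorial_le_exp (x := (k:ℝ)) (le_of_lt hk0) k
  have h5 : (n : ℝ) ^ k / k.factorial ≤ Real.exp k * ((n : ℝ) / k) ^ k := by
    have hkk : (0 : ℝ) < (k : ℝ) ^ k := pow_pos hk0 k
    have := mul_le_mul_of_nonneg_right h4 (le_of_lt (pow_pos (div_pos hn0 hk0) k))
    calc (n : ℝ) ^ k / k.factorial
        = (k : ℝ) ^ k / k.factorial * ((n : ℝ) / k) ^ k := by
          rw [div_pow]; field_simp
      _ ≤ Real.exp k * ((n : ℝ) / k) ^ k := this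
  have h6 : ((n : ℝ) / k) ^ k = Real.exp ((k : ℝ) * Real.log ((n : ℝ) / k)) := by
    rw [← Real.log_pow, Real.exp_log (pow_pos (div_pos hn0 hk0) k)]
  calc (n.choose k : ℝ) ≤ (n : ℝ) ^ k / k.factorial := h3
    _ ≤ Real.exp k * ((n : ℝ) / k) ^ k := h5
    _ = Real.exp ((k : ℝ) * (1 + Real.log ((n : ℝ) / (k : ℝ)))) := by
        rw [h6, ← Real.exp_add]; ring_nf

/-- key log inequality: `s * log (n/s) ≥ (log n) / 2` for `1 ≤ s`, `2s ≤ n`. -/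
lemma slog_aux (S Nn : ℝ) (hS : 1 ≤ S) (hN : 2 * S ≤ Nn) :
    Real.log Nn / 2 ≤ S * Real.log (Nn / S) := by
  have hS0 : (0 : ℝ) < S := lt_of_lt_of_le one_pos hS
  have hN0 : (0 : ℝ) < Nn := lt_of_lt_of_le (by linarith) hN
  have hdiv2 : (2 : ℝ) ≤ Nn / S := (le_div_iff₀ hS0).mpr (by linarith)
  have hL2 : Real.log 2 ≤ Real.log (Nn / S) := Real.log_le_log (by norm_num) hdiv2
  have hlog2 : (0.6931471803 : ℝ) < Real.log 2 := Real.log_two_gt_d9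
  have hL0 : 0 ≤ Real.log (Nn / S) := le_trans (by linarith) hL2
  rcases le_or_gt (S ^ 2) Nn with h | h
  · -- ln S ≤ (ln Nn)/2, so ln(Nn/S) ≥ (ln Nn)/2
    have h1 : Real.log (S ^ 2) ≤ Real.log Nn := Real.log_le_log (pow_pos hS0 2) h
    rw [Real.log_pow] at h1
    push_cast at h1
    have h2 : Real.log (Nn / S) = Real.log Nn - Real.log S := Real.log_div (ne_of_gt hN0) (ne_of_gt hS0)
    have h3 : Real.log Nn / 2 ≤ Real.log (Nn / S) := by rw [h2]; linarith
    calc Real.log Nn / 2 ≤ Real.log (Nn / S) := h3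
      _ = 1 * Real.log (Nn / S) := (one_mul _).symm
      _ ≤ S * Real.log (Nn / S) := mul_le_mul_of_nonneg_right hS hL0
  · -- Nn < S², so (ln Nn)/2 < ln S ≤ 2(√S - 1) ≤ S ln 2 ≤ S ln(Nn/S)
    have h1 : Real.log Nn ≤ Real.log (S ^ 2) := Real.log_le_log hN0 (le_of_lt h)
    rw [Real.log_pow] at h1
    push_cast at h1
    have hsq : Real.sqrt S * Real.sqrt S = S := Real.mul_self_sqrt (le_of_lt hS0)
    have hsq1 : 1 ≤ Real.sqrt S := by
      nlinarith [Real.sqrt_nonneg S]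
    have h2 : Real.log (Real.sqrt S) = Real.log S / 2 := Real.log_sqrt (le_of_lt hS0)
    have h3 : Real.log (Real.sqrt S) ≤ Real.sqrt S - 1 :=
      Real.log_le_sub_one_of_pos (by linarith)
    have h4 : Real.log S ≤ S * Real.log 2 := by
      nlinarith [sq_nonneg (Real.sqrt S * (0.6931471803) - 1), Real.sqrt_nonneg S,
        mul_le_mul_of_nonneg_left (le_of_lt hlog2) (le_of_lt hS0)]
    have h5 : S * Real.log 2 ≤ S * Real.log (Nn / S) :=
      mul_le_mul_of_nonneg_left hL2 (le_of_lt hS0)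
    linarith
  
/-- `log y ≤ y / e` for `y > 0`. -/
lemma log_le_div_e (y : ℝ) (hy : 0 < y) : Real.log y ≤ y / Real.exp 1 := by
  have h := Real.add_one_le_exp (Real.log y - 1)
  rw [Real.exp_sub, Real.exp_log hy] at h
  have he : (0 : ℝ) < Real.exp 1 := Real.exp_pos 1
  calc Real.log y = (Real.log y - 1) + 1 := by ring
    _ ≤ y / Real.exp 1 := h

/-- For every real constant `Φ` with `0 < Φ ≤ 1/10`, there exist an
integer `c ≥ 1`, a real constant `a ≥ 1`, and a threshold `N₀ ∈ ℕ` such that for every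
integer `n ≥ N₀` and every integer `s` with `1 ≤ s ≤ n/2`, one has
`(n choose s) · (c·s choose ⌈(1−Φ)·c·s⌉) · (a·s/n)^((1−Φ)·c·s) ≤ 1/n²`,
where the last factor uses real exponentiation. -/
theorem stmt0 (Φ : ℝ) (hΦ0 : 0 < Φ) (hΦ1 : Φ ≤ 1 / 10) :
    ∃ c : ℕ, 1 ≤ c ∧ ∃ a : ℝ, 1 ≤ a ∧ ∃ N₀ : ℕ,
      ∀ n s : ℕ, N₀ ≤ n → 1 ≤ s → (s : ℝ) ≤ (n : ℝ) / 2 →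
        (n.choose s : ℝ) * ((c * s).choose ⌈(1 - Φ) * (c : ℝ) * (s : ℝ)⌉₊ : ℝ)
            * ((a * (s : ℝ) / (n : ℝ)) ^ ((1 - Φ) * (c : ℝ) * (s : ℝ)))
          ≤ 1 / (n : ℝ) ^ 2 := by
  refine ⟨100, by norm_num, 1, le_refl 1, 2, ?_⟩
  intro n s hn hs hsn
  set S : ℝ := (s : ℝ) with hSdef
  set Nn : ℝ := (n : ℝ) with hNdef
  have hS1 : (1 : ℝ) ≤ S := by rw [hSdef]; exact_mod_cast hs
  have hS0 : (0 : ℝ) < S := lt_of_lt_of_le one_pos hS1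
  have h2S : 2 * S ≤ Nn := by linarith
  have hN0 : (0 : ℝ) < Nn := by linarith
  have hΦ' : Φ < 1 := lt_of_le_of_lt hΦ1 (by norm_num)
  set L : ℝ := Real.log (Nn / S) with hLdef
  have hdiv2 : (2 : ℝ) ≤ Nn / S := (le_div_iff₀ hS0).mpr (by linarith)
  have hlog2 : (0.6931471803 : ℝ) < Real.log 2 := Real.log_two_gt_d9
  have hL2 : Real.log 2 ≤ L := Real.log_le_log (by norm_num) hdiv2
  have hL0 : (0 : ℝ) < L := by linarith
  have hslog : Real.log Nn / 2 ≤ S * L := slog_aux S Nn hS1 h2S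
  have hNlog0 : 0 ≤ Real.log Nn := Real.log_nonneg (by linarith)
  -- exponent bounds
  -- (A) first binomial
  have hsn' : s ≤ n := by
    have h : (S : ℝ) ≤ Nn := by linarith
    rw [hSdef, hNdef] at h
    exact_mod_cast h
  have hA : (n.choose s : ℝ) ≤ Real.exp (S * (1 + L)) := choose_le_exp_aux n s hs hsn'
  -- (B) second binomial
  set m : ℕ := ⌈(1 - Φ) * (100 : ℝ) * S⌉₊ with hmdef
  have hcs0 : 0 < 100 * s := by positivity
  have hMcast : ((100 * s : ℕ) : ℝ) = 100 * S := by push_cast; ring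
  have hmle : m ≤ 100 * s := by
    apply Nat.ceil_le.mpr
    rw [hMcast]
    nlinarith
  have hmge : (1 - Φ) * (100 : ℝ) * S ≤ (m : ℝ) := Nat.le_ceil _
  set r : ℕ := 100 * s - m with hrdef
  have hrcast : (r : ℝ) = 100 * S - (m : ℝ) := by
    rw [hrdef]
    push_cast [hmle]
    ring
  have hrB : (r : ℝ) ≤ Φ * 100 * S := by rw [hrcast]; nlinarith
  have hchoose_symm : (100 * s).choose m = (100 * s).choose r := by
    rw [hrdef, Nat.choose_symm hmle]
  have hB : ((100 * s).choose m : ℝ) ≤ Real.exp (Φ * 100 * S * (1 - Real.log Φ)) := by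
    have hBpos : 0 < Φ * 100 * S := by positivity
    have hlogΦneg : Real.log Φ < 0 := Real.log_neg hΦ0 hΦ'
    rcases Nat.eq_zero_or_pos r with hr0 | hr1
    · rw [hchoose_symm, hr0, Nat.choose_zero_right]
      rw [show ((1:ℕ):ℝ) = Real.exp 0 by simp]
      exact Real.exp_le_exp.mpr (by nlinarith)
    · have hrR0 : (0 : ℝ) < (r : ℝ) := by exact_mod_cast hr1
      have hbound : ((100 * s).choose r : ℝ) ≤
          Real.exp ((r : ℝ) * (1 + Real.log (((100 * s : ℕ) : ℝ) / (r : ℝ)))) :=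
        choose_le_exp_aux (100 * s) r hr1 (Nat.sub_le _ _)
      rw [hchoose_symm]
      refine hbound.trans (Real.exp_le_exp.mpr ?_)
      rw [hMcast]
      -- let A = 100 S, B = Φ * 100 * S; r ≤ B ≤ A; show r(1+log(A/r)) ≤ B(1+log(A/B)) = B(1 - log Φ)
      set B : ℝ := Φ * 100 * S with hBdef
      have hBA : B ≤ 100 * S := by nlinarith
      have hAB : (100 * S) / B = 1 / Φ := by
        rw [hBdef]; field_simp
      have hlogsplit : Real.log (100 * S / (r : ℝ)) = Real.log (100 * S / B) + Real.log (B / (r : ℝ)) := by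
        rw [← Real.log_mul (by positivity) (by positivity)]
        congr 1
        field_simp
      have hlogAB : Real.log (100 * S / B) = - Real.log Φ := by
        rw [hAB, Real.log_div one_ne_zero (ne_of_gt hΦ0), Real.log_one]; ring
      have hlogBr : (r : ℝ) * Real.log (B / (r : ℝ)) ≤ B - (r : ℝ) := by
        have := Real.log_le_sub_one_of_pos (show (0:ℝ) < B / (r:ℝ) by positivity)
        calc (r : ℝ) * Real.log (B / (r : ℝ)) ≤ (r : ℝ) * (B / (r : ℝ) - 1) :=
              mul_le_mul_of_nonneg_left this (le_of_lt hrR0)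
          _ = B - (r : ℝ) := by field_simp
      have hlogAB1 : (1 : ℝ) ≤ Real.log (100 * S / B) := by
        rw [hlogAB]
        have : Real.log Φ ≤ Real.log (1/10) := Real.log_le_log hΦ0 hΦ1
        have h10 : Real.log (1/10 : ℝ) = - Real.log 10 := by
          rw [Real.log_div one_ne_zero (by norm_num), Real.log_one]; ring
        have : Real.log Φ ≤ - Real.log 10 := by rw [← h10]; exact this
        have hlog10 : (1 : ℝ) ≤ Real.log 10 :=
          (Real.le_log_iff_exp_le (by norm_num)).mpr
            (le_trans (le_of_lt Real.exp_one_lt_d9) (by norm_num))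
        linarith
      calc (r : ℝ) * (1 + Real.log (100 * S / (r : ℝ)))
          = (r : ℝ) * (1 + Real.log (100 * S / B)) + (r : ℝ) * Real.log (B / (r : ℝ)) := by
            rw [hlogsplit]; ring
        _ ≤ (r : ℝ) * (1 + Real.log (100 * S / B)) + (B - (r : ℝ)) := by linarith
        _ ≤ B * (1 + Real.log (100 * S / B)) := by nlinarith [hrB]
        _ = B * (1 - Real.log Φ) := by rw [hlogAB]; ring
  -- (C) the rpow factor
  have hC : (1 * S / Nn) ^ ((1 - Φ) * (100 : ℝ) * S) =
      Real.exp (-((1 - Φ) * 100 * S * L)) := by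
    rw [one_mul, Real.rpow_def_of_pos (by positivity)]
    congr 1
    rw [show S / Nn = (Nn / S)⁻¹ by field_simp, Real.log_inv]
    ring
  -- (D) RHS
  have hD : 1 / Nn ^ 2 = Real.exp (-(2 * Real.log Nn)) := by
    rw [Real.exp_neg, one_div]
    congr 1
    rw [show (2 : ℝ) * Real.log Nn = Real.log (Nn ^ 2) by rw [Real.log_pow]; push_cast; ring,
      Real.exp_log (show (0:ℝ) < Nn ^ 2 by positivity)]
  -- numeric bound on Φ(1 - log Φ)
  have hΦlog : Φ * (1 - Real.log Φ) ≤ 1 / 2 := by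
    have h1 : Real.log (1 / Φ) ≤ (1 / Φ) / Real.exp 1 := log_le_div_e _ (by positivity)
    have h2 : Real.log (1 / Φ) = - Real.log Φ := by
      rw [Real.log_div one_ne_zero (ne_of_gt hΦ0), Real.log_one]; ring
    have he : (2.7182818283 : ℝ) < Real.exp 1 := Real.exp_one_gt_d9
    have he0 : (0 : ℝ) < Real.exp 1 := Real.exp_pos 1
    have h3 : Φ * (- Real.log Φ) ≤ 1 / Real.exp 1 := by
      rw [← h2]
      calc Φ * Real.log (1 / Φ) ≤ Φ * ((1 / Φ) / Real.exp 1) :=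
            mul_le_mul_of_nonneg_left h1 (le_of_lt hΦ0)
        _ = 1 / Real.exp 1 := by field_simp
    have h4 : 1 / Real.exp 1 ≤ 1 / 2.7182818283 := by
      apply div_le_div_of_nonneg_left (by norm_num) (by norm_num) (le_of_lt he)
    nlinarith
  -- combine
  have hmid0 : (0 : ℝ) ≤ ((100 * s).choose m : ℝ) := by positivity
  have hrpow0 : (0 : ℝ) ≤ (1 * S / Nn) ^ ((1 - Φ) * (100 : ℝ) * S) := by
    apply Real.rpow_nonneg; positivity
  calc (n.choose s : ℝ) * ((100 * s).choose m : ℝ) * ((1 * S / Nn) ^ ((1 - Φ) * (100 : ℝ) * S))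
      ≤ Real.exp (S * (1 + L)) * Real.exp (Φ * 100 * S * (1 - Real.log Φ)) *
          Real.exp (-((1 - Φ) * 100 * S * L)) := by
        apply mul_le_mul
        · exact mul_le_mul hA hB hmid0 (le_of_lt (Real.exp_pos _))
        · rw [hC]
        · exact hrpow0
        · positivity
    _ = Real.exp (S * (1 + L) + Φ * 100 * S * (1 - Real.log Φ) - (1 - Φ) * 100 * S * L) := by
        rw [← Real.exp_add, ← Real.exp_add]; ring_nf
    _ ≤ Real.exp (-(2 * Real.log Nn)) := by
        apply Real.exp_le_exp.mpr
        have key : Φ * 100 * S * (1 - Real.log Φ) ≤ 50 * S := by nlinarith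
        have h90 : (90 : ℝ) ≤ (1 - Φ) * 100 := by nlinarith
        have hSL : (0 : ℝ) < S * L := by positivity
        nlinarith [mul_le_mul_of_nonneg_right h90 (le_of_lt hSL),
          mul_le_mul_of_nonneg_left hL2 (le_of_lt hS0)]
    _ = 1 / Nn ^ 2 := hD.symm
end

section
/- Let n ≥ 2 be an integer and let n′ > 0 be a real number with n′ ≥ 3·ln(2n²). Let X be a random variable with the Poisson distribution of mean n′. Then P( n′ − √(3·n′·ln(2n²)) ≤ X ≤ n′ + √(3·n′·ln(2n²)) ) ≥ 1 − 1/n². -/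
/-!
Chernoff's method. The Poisson law `Po(r)` has moment generating function `exp (r (eˢ - 1))`,
and for `|s| ≤ 1` the bound `eˢ ≤ 1 + s + 3s²/4` turns the Chernoff exponent of either tail at
distance `t` into `3rs²/4 - |s|t`; the choice `|s| = 2t/(3r)` gives the tail bound
`exp (-t²/(3r))`. With `t² = 3n'·ln(2n²)` each tail has mass at most `1/(2n²)`, and
`n' ≥ 3·ln(2n²)` is exactly what makes `t ≤ n'`, hence `|s| ≤ 1`.
-/

open MeasureTheory ProbabilityTheory Real
open scoped NNReal Nat

lemma measure_preimage_le_of_measure_fiber_eq {Ω α : Type*} {mΩ : MeasurableSpace Ω}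
    [MeasurableSpace α] [Countable α] [MeasurableSingletonClass α]
    {P : Measure Ω} {ν : Measure α} {X : Ω → α} (h : ∀ a, P (X ⁻¹' {a}) = ν {a}) (s : Set α) :
    P (X ⁻¹' s) ≤ ν s :=
  calc P (X ⁻¹' s) = P (⋃ a ∈ s, X ⁻¹' {a}) := by rw [Set.biUnion_preimage_singleton]
    _ ≤ ∑' a : s, P (X ⁻¹' {(a : α)}) := measure_biUnion_le P s.to_countable _
    _ = ∑' a : s, ν (id ⁻¹' {(a : α)}) := by simp only [h, Set.preimage_id]
    _ = ν s := tsum_measure_preimage_singleton s.to_countable fun _ _ ↦ measurableSet_singleton _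

lemma ofReal_one_sub_le_of_measure_compl_le {Ω : Type*} {mΩ : MeasurableSpace Ω}
    {P : Measure Ω} [IsProbabilityMeasure P] {s : Set Ω} {ε : ℝ} (hε : 0 ≤ ε)
    (h : P sᶜ ≤ ENNReal.ofReal ε) : ENNReal.ofReal (1 - ε) ≤ P s := by
  rw [ENNReal.ofReal_sub _ hε, ENNReal.ofReal_one, tsub_le_iff_right, ← measure_univ (μ := P)]
  exact (measure_univ_le_add_compl s).trans (add_le_add_right h _)

lemma Real.exp_le_one_add_add_three_quarters_mul_sq {x : ℝ} (hx : |x| ≤ 1) :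
    exp x ≤ 1 + x + 3 / 4 * x ^ 2 := by
  have h := (abs_sub_le_iff.mp (exp_bound (n := 2) hx (by norm_num))).1
  norm_num [Finset.sum_range_succ, sq_abs] at h
  linarith

namespace ProbabilityTheory

lemma hasSum_poisson_mul_exp_mul (r : ℝ≥0) (t : ℝ) :
    HasSum (fun n : ℕ ↦ exp (-r) * r ^ n / n ! * exp (t * n)) (exp (r * (exp t - 1))) := by
  have hexp := (NormedSpace.expSeries_div_hasSum_exp ((r : ℝ) * exp t)).mul_left (exp (-r))
  rw [← exp_eq_exp_ℝ, ← exp_add, show -(r : ℝ) + r * exp t = r * (exp t - 1) by ring] at hexp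
  refine hexp.congr_fun fun n ↦ ?_
  rw [mul_pow, ← exp_nat_mul, mul_comm (n : ℝ) t]
  ring

lemma integrable_exp_mul_poissonMeasure (r : ℝ≥0) (t : ℝ) :
    Integrable (fun n : ℕ ↦ exp (t * n)) Po(r) := by
  rw [integrable_poissonMeasure_iff]
  simpa only [norm_of_nonneg (exp_nonneg _)] using (hasSum_poisson_mul_exp_mul r t).summable

lemma mgf_poissonMeasure (r : ℝ≥0) (t : ℝ) :
    mgf (fun n : ℕ ↦ (n : ℝ)) Po(r) t = exp (r * (exp t - 1)) := by
  rw [mgf, integral_poissonMeasure]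
  exact (hasSum_poisson_mul_exp_mul r t).tsum_eq

lemma poisson_cumulant_le (r : ℝ≥0) {s : ℝ} (hs : |s| ≤ 1) :
    r * (exp s - 1) ≤ r * s + 3 / 4 * r * s ^ 2 := by
  linarith [mul_le_mul_of_nonneg_left (exp_le_one_add_add_three_quarters_mul_sq hs) r.coe_nonneg]

lemma poissonMeasure_real_ge_add_le (r : ℝ≥0) (hr : 0 < r) {t : ℝ} (ht : 0 ≤ t)
    (htr : 2 * t ≤ 3 * r) : Po(r).real {n | r + t ≤ n} ≤ exp (-(t ^ 2 / (3 * r))) := by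
  have hr' : (0 : ℝ) < r := hr
  set s := 2 * t / (3 * r) with hs
  have hs0 : 0 ≤ s := by positivity
  have hs1 : |s| ≤ 1 := by rwa [abs_of_nonneg hs0, hs, div_le_one (by positivity)]
  have hst : 3 / 4 * r * s ^ 2 - s * t = -(t ^ 2 / (3 * r)) := by rw [hs]; field_simp; ring
  calc Po(r).real {n | r + t ≤ n}
      ≤ exp (-s * (r + t)) * mgf (fun n : ℕ ↦ (n : ℝ)) Po(r) s :=
        measure_ge_le_exp_mul_mgf _ hs0 (integrable_exp_mul_poissonMeasure r s)
    _ = exp (r * (exp s - 1) - s * (r + t)) := by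
        rw [mgf_poissonMeasure, ← exp_add]; ring_nf
    _ ≤ exp (-(t ^ 2 / (3 * r))) := by
        gcongr; linarith [poisson_cumulant_le r hs1]

lemma poissonMeasure_real_le_sub_le (r : ℝ≥0) (hr : 0 < r) {t : ℝ} (ht : 0 ≤ t)
    (htr : 2 * t ≤ 3 * r) : Po(r).real {n | n ≤ r - t} ≤ exp (-(t ^ 2 / (3 * r))) := by
  have hr' : (0 : ℝ) < r := hr
  set s := -(2 * t / (3 * r)) with hs
  have hs0 : s ≤ 0 := by rw [hs, neg_nonpos]; positivity
  have hs1 : |s| ≤ 1 := by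
    rwa [hs, abs_neg, abs_of_nonneg (by positivity), div_le_one (by positivity)]
  have hst : 3 / 4 * r * s ^ 2 + s * t = -(t ^ 2 / (3 * r)) := by rw [hs]; field_simp; ring
  calc Po(r).real {n | n ≤ r - t}
      ≤ exp (-s * (r - t)) * mgf (fun n : ℕ ↦ (n : ℝ)) Po(r) s :=
        measure_le_le_exp_mul_mgf _ hs0 (integrable_exp_mul_poissonMeasure r s)
    _ = exp (r * (exp s - 1) - s * (r - t)) := by
        rw [mgf_poissonMeasure, ← exp_add]; ring_nf
    _ ≤ exp (-(t ^ 2 / (3 * r))) := by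
        gcongr; linarith [poisson_cumulant_le r hs1]

lemma poissonMeasure_real_lt_abs_sub_le (r : ℝ≥0) (hr : 0 < r) {t : ℝ} (ht : 0 ≤ t)
    (htr : 2 * t ≤ 3 * r) :
    Po(r).real {n | t < |(n : ℝ) - r|} ≤ 2 * exp (-(t ^ 2 / (3 * r))) := by
  have hsub : {n : ℕ | t < |(n : ℝ) - r|} ⊆ {n | n ≤ r - t} ∪ {n | r + t ≤ n} := by
    intro n hn
    rcases lt_abs.mp (Set.mem_ofPred_eq ▸ hn) with h | h
    · exact Or.inr (by simp only [Set.mem_ofPred_eq]; linarith)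
    · exact Or.inl (by simp only [Set.mem_ofPred_eq]; linarith)
  calc Po(r).real {n | t < |(n : ℝ) - r|}
      ≤ Po(r).real {n | n ≤ r - t} + Po(r).real {n | r + t ≤ n} :=
        (measureReal_mono hsub).trans (measureReal_union_le _ _)
    _ ≤ 2 * exp (-(t ^ 2 / (3 * r))) := by
        linarith [poissonMeasure_real_le_sub_le r hr ht htr,
          poissonMeasure_real_ge_add_le r hr ht htr]

end ProbabilityTheory

theorem stmt5_general {Ω : Type*} [MeasurableSpace Ω] (P : Measure Ω) [IsProbabilityMeasure P]
    (n : ℕ) (hn : 2 ≤ n) (n' : ℝ)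
    (hn' : 3 * Real.log (2 * (n : ℝ) ^ 2) ≤ n')
    (X : Ω → ℕ)
    (hX : ∀ k : ℕ, P {ω | X ω = k}
        = ENNReal.ofReal (Real.exp (-n') * n' ^ k / (Nat.factorial k))) :
    ENNReal.ofReal (1 - 1 / (n : ℝ) ^ 2)
      ≤ P {ω | n' - Real.sqrt (3 * n' * Real.log (2 * (n : ℝ) ^ 2)) ≤ (X ω : ℝ)
            ∧ (X ω : ℝ) ≤ n' + Real.sqrt (3 * n' * Real.log (2 * (n : ℝ) ^ 2))} := by
  set L := Real.log (2 * (n : ℝ) ^ 2)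
  set t := Real.sqrt (3 * n' * L)
  have hn2 : (2 : ℝ) ≤ n := by exact_mod_cast hn
  have hL : 0 < L := Real.log_pos (by nlinarith)
  have hn'0 : 0 < n' := by linarith
  set r : ℝ≥0 := ⟨n', hn'0.le⟩
  have hr : (r : ℝ) = n' := rfl
  have ht2 : t ^ 2 = 3 * n' * L := Real.sq_sqrt (by positivity)
  have htr : t ≤ n' := Real.sqrt_le_iff.mpr ⟨hn'0.le, by nlinarith⟩
  have htail : Po(r).real {k | t < |(k : ℝ) - r|} ≤ 1 / (n : ℝ) ^ 2 := by
    refine (poissonMeasure_real_lt_abs_sub_le r hn'0 (Real.sqrt_nonneg _)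
      (by rw [hr]; linarith)).trans_eq ?_
    rw [ht2, hr, show 3 * n' * L / (3 * n') = L by field_simp, Real.exp_neg,
      Real.exp_log (by positivity)]
    field_simp
  have hfiber : ∀ k, P (X ⁻¹' {k}) = Po(r) {k} := fun k ↦ by
    rw [poissonMeasure_singleton]; exact hX k
  refine ofReal_one_sub_le_of_measure_compl_le (by positivity) ?_
  calc P {ω | n' - t ≤ (X ω : ℝ) ∧ (X ω : ℝ) ≤ n' + t}ᶜ
      = P (X ⁻¹' {k | t < |(k : ℝ) - r|}) := by
        congr 1; ext ω
        simp only [Set.mem_compl_iff, Set.mem_preimage, Set.mem_ofPred_eq, lt_abs, not_and_or,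
          not_le, hr]
        constructor <;> rintro (h | h) <;> [right; left; right; left] <;> linarith
    _ ≤ Po(r) {k | t < |(k : ℝ) - r|} := measure_preimage_le_of_measure_fiber_eq hfiber _
    _ = ENNReal.ofReal (Po(r).real {k | t < |(k : ℝ) - r|}) := (ofReal_measureReal).symm
    _ ≤ ENNReal.ofReal (1 / (n : ℝ) ^ 2) := ENNReal.ofReal_le_ofReal htail

/-- Let `n ≥ 2` be an integer and let `n′ > 0` be a real number with
`n′ ≥ 3·ln(2n²)`. Let `X` be a random variable with the Poisson distribution of mean `n′`
(i.e. `P(X = k) = e^{−n′}·n′^k / k!` for every `k ∈ ℕ`). Then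
`P( n′ − √(3·n′·ln(2n²)) ≤ X ≤ n′ + √(3·n′·ln(2n²)) ) ≥ 1 − 1/n²`. -/
theorem stmt5 {Ω : Type*} [MeasurableSpace Ω] (P : Measure Ω) [IsProbabilityMeasure P]
    (n : ℕ) (hn : 2 ≤ n) (n' : ℝ) (hn'0 : 0 < n')
    (hn' : 3 * Real.log (2 * (n : ℝ) ^ 2) ≤ n')
    (X : Ω → ℕ)
    (hX : ∀ k : ℕ, P {ω | X ω = k}
        = ENNReal.ofReal (Real.exp (-n') * n' ^ k / (Nat.factorial k))) :
    ENNReal.ofReal (1 - 1 / (n : ℝ) ^ 2)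
      ≤ P {ω | n' - Real.sqrt (3 * n' * Real.log (2 * (n : ℝ) ^ 2)) ≤ (X ω : ℝ)
            ∧ (X ω : ℝ) ≤ n' + Real.sqrt (3 * n' * Real.log (2 * (n : ℝ) ^ 2))} :=
  stmt5_general P n hn n' hn' X hX
end

section
/- Let (Ω, P) be a probability space, let A₁, …, A_m be events, and let p ∈ [0,1]. Suppose that for every subset J ⊆ {1,…,m} and every i ∉ J such that P(⋂_{j∈J} A_j) > 0, the conditional probability P(A_i | ⋂_{j∈J} A_j) is at most p (and P(A_i) ≤ p for each i). Then for every k with 0 ≤ k ≤ m, the probability that at least k of the events A₁, …, A_m occur is at most (m choose k)·p^k. -/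
open MeasureTheory ProbabilityTheory
open scoped ENNReal

/-! Chaining the conditional bounds gives `P(⋂_{j∈J} A_j) ≤ p^|J|` for every `J`. If at least
`k` events occur, then all events of some `k`-subset `J` occur, so a union bound over the
`m choose k` such subsets finishes the proof. -/

namespace ProbabilityTheory

variable {Ω ι : Type*} [MeasurableSpace Ω] {μ : Measure Ω} {A : ι → Set Ω}

theorem measure_biInter_le_mul_pow_of_cond_le [IsFiniteMeasure μ]
    (hA : ∀ i, MeasurableSet (A i)) {q : ℝ≥0∞}
    (hcond : ∀ (J : Finset ι) (i : ι), i ∉ J → 0 < μ (⋂ j ∈ J, A j) →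
      μ[A i | ⋂ j ∈ J, A j] ≤ q)
    (J : Finset ι) : μ (⋂ j ∈ J, A j) ≤ μ Set.univ * q ^ J.card := by
  classical
  induction J using Finset.induction_on with
  | empty => simp
  | @insert i J hiJ ih =>
    rw [Finset.card_insert_of_notMem hiJ, Finset.set_biInter_insert, Set.inter_comm]
    obtain hzero | hpos := eq_zero_or_pos (μ (⋂ j ∈ J, A j))
    · exact (measure_mono_null Set.inter_subset_left hzero).trans_le zero_le
    calc μ ((⋂ j ∈ J, A j) ∩ A i)
        = μ[A i | ⋂ j ∈ J, A j] * μ (⋂ j ∈ J, A j) :=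
          (cond_mul_eq_inter (J.measurableSet_biInter fun j _ => hA j) _ μ).symm
      _ ≤ q * (μ Set.univ * q ^ J.card) := mul_le_mul' (hcond J i hiJ hpos) ih
      _ = μ Set.univ * q ^ (J.card + 1) := by ring

end ProbabilityTheory

namespace Set

theorem setOf_le_card_subset_iUnion_powersetCard {Ω ι : Type*} [Fintype ι] (A : ι → Set Ω)
    (k : ℕ) :
    {ω | k ≤ Nat.card {i // ω ∈ A i}} ⊆
      ⋃ J ∈ Finset.univ.powersetCard k, ⋂ j ∈ J, A j := by
  classical
  intro ω hω
  rw [Set.mem_ofPred_eq, Nat.card_eq_fintype_card, Fintype.card_subtype] at hω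
  obtain ⟨J, hJA, hJk⟩ := Finset.exists_subset_card_eq hω
  exact Set.mem_biUnion (Finset.mem_powersetCard.mpr ⟨J.subset_univ, hJk⟩)
    (Set.mem_biInter fun j hj => (Finset.mem_filter.mp (hJA hj)).2)

end Set

namespace MeasureTheory

variable {Ω ι : Type*} [MeasurableSpace Ω] [Fintype ι] {A : ι → Set Ω}

theorem measure_setOf_le_card_le_choose_mul (μ : Measure Ω) {k : ℕ} {r : ℝ≥0∞}
    (hinter : ∀ J : Finset ι, J.card = k → μ (⋂ j ∈ J, A j) ≤ r) :
    μ {ω | k ≤ Nat.card {i // ω ∈ A i}} ≤ (Fintype.card ι).choose k * r :=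
  calc μ {ω | k ≤ Nat.card {i // ω ∈ A i}}
      ≤ μ (⋃ J ∈ Finset.univ.powersetCard k, ⋂ j ∈ J, A j) :=
        measure_mono (Set.setOf_le_card_subset_iUnion_powersetCard A k)
    _ ≤ ∑ J ∈ Finset.univ.powersetCard k, μ (⋂ j ∈ J, A j) := measure_biUnion_finset_le _ _
    _ ≤ ∑ _J ∈ Finset.univ.powersetCard k, r :=
        Finset.sum_le_sum fun J hJ => hinter J (Finset.mem_powersetCard.mp hJ).2
    _ = (Fintype.card ι).choose k * r := by
        rw [Finset.sum_const, Finset.card_powersetCard, Finset.card_univ, nsmul_eq_mul]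

end MeasureTheory

theorem stmt9_general {Ω : Type*} [MeasurableSpace Ω] (P : Measure Ω) [IsProbabilityMeasure P]
    (m : ℕ) (A : Fin m → Set Ω) (hAmeas : ∀ i, MeasurableSet (A i))
    (p : ℝ)
    (hcond : ∀ (J : Finset (Fin m)) (i : Fin m), i ∉ J →
      0 < P (⋂ j ∈ J, A j) →
      ProbabilityTheory.cond P (⋂ j ∈ J, A j) (A i) ≤ ENNReal.ofReal p) :
    ∀ k : ℕ, k ≤ m →
      P {ω | k ≤ Nat.card {i : Fin m // ω ∈ A i}}
        ≤ (m.choose k : ℝ≥0∞) * ENNReal.ofReal p ^ k := by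
  intro k _
  have hbound := measure_setOf_le_card_le_choose_mul (k := k) P fun J hJ => by
    simpa [hJ] using measure_biInter_le_mul_pow_of_cond_le hAmeas hcond J
  rwa [Fintype.card_fin] at hbound

/-- Let `(Ω, P)` be a probability space, let `A₁, …, A_m` be events
(indexed by `Fin m`), and let `p ∈ [0,1]`. Suppose that `P(A_i) ≤ p` for each `i`, and
for every subset `J ⊆ {1,…,m}` and every `i ∉ J` such that `P(⋂_{j∈J} A_j) > 0`, the
conditional probability `P(A_i | ⋂_{j∈J} A_j)` is at most `p`. Then for every `k` with
`0 ≤ k ≤ m`, the probability that at least `k` of the events `A₁, …, A_m` occur is at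
most `(m choose k)·p^k`. -/
theorem stmt9 {Ω : Type*} [MeasurableSpace Ω] (P : Measure Ω) [IsProbabilityMeasure P]
    (m : ℕ) (A : Fin m → Set Ω) (hAmeas : ∀ i, MeasurableSet (A i))
    (p : ℝ) (hp0 : 0 ≤ p) (hp1 : p ≤ 1)
    (hsingle : ∀ i, P (A i) ≤ ENNReal.ofReal p)
    (hcond : ∀ (J : Finset (Fin m)) (i : Fin m), i ∉ J →
      0 < P (⋂ j ∈ J, A j) →
      ProbabilityTheory.cond P (⋂ j ∈ J, A j) (A i) ≤ ENNReal.ofReal p) :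
    ∀ k : ℕ, k ≤ m →
      P {ω | k ≤ Nat.card {i : Fin m // ω ∈ A i}}
        ≤ (m.choose k : ℝ≥0∞) * ENNReal.ofReal p ^ k :=
  stmt9_general P m A hAmeas p hcond
end

section
/- Fix a real constant Φ with 0 < Φ ≤ 1/10. There exist an integer c ≥ 1 and a threshold N₀ ∈ ℕ such that for every n ≥ N₀ the following holds. Let T : Fin n × Fin c → Fin n be a family of n·c mutually independent random variables, each uniformly distributed on Fin n (each vertex v independently picks c uniformly random targets T(v,1), …, T(v,c)). Then with probability at least 1 − 1/n, every nonempty subset S ⊆ Fin n with |S| ≤ n/2 satisfies: the number of pairs (v, j) with v ∈ S and T(v,j) ∈ S is at most (1−Φ)·c·|S|. -/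
/-!
Take `c = 20`; since `Φ ≤ 1/10`, a bad map `T` has a set `S` of size `s ≤ n/2` with at least
`18 s` of its `20 s` edges landing in `S`. Then some fixed set of `18 s` of these edges lands in
`S`, which happens for a `(s/n)^{18 s}` fraction of the maps. A union bound over the
`C(20 s, 2 s) ≤ (10e)^{2 s}` choices of the edges and the `C(n, s) ≤ (e n/s)^s` choices of `S`
bounds the fraction of maps that are bad at size `s` by `(100 e³ (s/n)^{15})^s (s/n)^{2 s}`.
The first factor is at most `1` and, because `s ≤ n/2`, `(s/n)^s ≤ 2^{1-s} s/n ≤ 1/n`; so each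
size contributes at most `1/n²`, and the `n/2` sizes together at most `1/n`.
-/

open Finset

theorem Nat.choose_le_exp_one_mul_div_pow (n k : ℕ) :
    (n.choose k : ℝ) ≤ (Real.exp 1 * n / k) ^ k := by
  rcases k.eq_zero_or_pos with rfl | hk
  · simp
  have hk' : (0 : ℝ) < k := by exact_mod_cast hk
  calc (n.choose k : ℝ) ≤ n ^ k / k.factorial := Nat.choose_le_pow_div k n
    _ = (n / k) ^ k * (k ^ k / k.factorial) := by rw [div_pow]; field_simp
    _ ≤ (n / k) ^ k * Real.exp k := by gcongr; exact Real.pow_div_factorial_le_exp _ hk'.le k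
    _ = (Real.exp 1 * n / k) ^ k := by rw [← Real.exp_one_pow]; ring

theorem div_pow_self_le_one_div {s n : ℕ} (hs : 1 ≤ s) (hsn : 2 * s ≤ n) :
    ((s : ℝ) / n) ^ s ≤ 1 / n := by
  have hs' : (0 : ℝ) < s := by exact_mod_cast hs
  have hn : (0 : ℝ) < n := by norm_cast; omega
  have hhalf : (s : ℝ) / n ≤ 1 / 2 := by
    rw [div_le_iff₀ hn]; have : (2 * s : ℝ) ≤ n := by exact_mod_cast hsn
    linarith
  have hpow : (s : ℝ) ≤ 2 ^ (s - 1) := by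
    have : s - 1 < 2 ^ (s - 1) := Nat.lt_two_pow_self
    exact_mod_cast (show s ≤ 2 ^ (s - 1) by omega)
  calc ((s : ℝ) / n) ^ s = (s / n) * (s / n) ^ (s - 1) := by
        rw [← pow_succ']; congr 1; omega
    _ ≤ (s / n) * (1 / 2) ^ (s - 1) := by gcongr
    _ ≤ (s / n) * (1 / s) := by
        gcongr; rw [one_div_pow]; exact one_div_le_one_div_of_le hs' hpow
    _ = 1 / n := by field_simp

theorem Finset.card_filter_forall_mem_mul_pow {α β : Type*} [Fintype α] [DecidableEq α]
    [Fintype β] [DecidableEq β] (A : Finset α) (S : Finset β) :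
    #{f : α → β | ∀ a ∈ A, f a ∈ S} * Fintype.card β ^ #A
      = #S ^ #A * Fintype.card β ^ Fintype.card α := by
  have hpi : ({f : α → β | ∀ a ∈ A, f a ∈ S} : Finset (α → β))
      = Fintype.piFinset fun a => if a ∈ A then S else univ := by
    ext f; simp only [mem_filter, mem_univ, true_and, Fintype.mem_piFinset]
    refine ⟨fun h a => ?_, fun h a ha => by simpa [ha] using h a⟩
    split_ifs with ha
    exacts [h a ha, mem_univ _]
  rw [hpi, Fintype.card_piFinset, prod_apply_ite, prod_const, prod_const, card_univ,
    mul_assoc, ← pow_add]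
  congr 2
  · simp
  · rw [filter_notMem_eq_sdiff, card_univ_sdiff]
    have := A.card_le_univ
    omega

theorem Finset.card_filter_le_card_filter_mem_mul_pow_le {α β : Type*} [Fintype α] [DecidableEq α]
    [Fintype β] [DecidableEq β] (D : Finset α) (S : Finset β) (k : ℕ) :
    #{f : α → β | k ≤ #{a ∈ D | f a ∈ S}} * Fintype.card β ^ k
      ≤ (#D).choose k * #S ^ k * Fintype.card β ^ Fintype.card α := by
  have hsub : ({f : α → β | k ≤ #{a ∈ D | f a ∈ S}} : Finset (α → β))
      ⊆ (D.powersetCard k).biUnion fun A => {f | ∀ a ∈ A, f a ∈ S} := by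
    intro f hf
    obtain ⟨A, hA, hAk⟩ := exists_subset_card_eq (mem_filter.1 hf).2
    simp only [mem_biUnion, mem_powersetCard, mem_filter, mem_univ, true_and]
    exact ⟨A, ⟨hA.trans (filter_subset _ _), hAk⟩, fun a ha => (mem_filter.1 (hA ha)).2⟩
  calc #{f : α → β | k ≤ #{a ∈ D | f a ∈ S}} * Fintype.card β ^ k
      ≤ (∑ A ∈ D.powersetCard k, #{f : α → β | ∀ a ∈ A, f a ∈ S}) * Fintype.card β ^ k :=
        Nat.mul_le_mul_right _ ((card_le_card hsub).trans card_biUnion_le)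
    _ = ∑ A ∈ D.powersetCard k, #S ^ k * Fintype.card β ^ Fintype.card α := by
        rw [sum_mul]
        refine sum_congr rfl fun A hA => ?_
        rw [← (mem_powersetCard.1 hA).2, card_filter_forall_mem_mul_pow]
    _ = (#D).choose k * #S ^ k * Fintype.card β ^ Fintype.card α := by
        rw [sum_const, card_powersetCard, smul_eq_mul, mul_assoc]

def insideCount {n c : ℕ} (T : Fin n × Fin c → Fin n) (S : Finset (Fin n)) : ℕ :=
  #{q : Fin n × Fin c | q.1 ∈ S ∧ T q ∈ S}

theorem card_filter_le_insideCount_le {n : ℕ} (hn : n ≠ 0) (c k : ℕ) (S : Finset (Fin n)) :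
    (#{T : Fin n × Fin c → Fin n | k ≤ insideCount T S} : ℝ)
      ≤ n ^ (n * c) * ((c * #S).choose k * (#S / n) ^ k) := by
  have hcount : ∀ T : Fin n × Fin c → Fin n,
      insideCount T S = #{q ∈ S ×ˢ (univ : Finset (Fin c)) | T q ∈ S} := by
    intro T; unfold insideCount; congr 1; ext q; simp
  have key := card_filter_le_card_filter_mem_mul_pow_le (S ×ˢ (univ : Finset (Fin c))) S k
  simp only [Fintype.card_prod, Fintype.card_fin, card_product, card_univ] at key
  simp only [hcount]
  rw [div_pow, ← mul_div_assoc, mul_div_assoc', le_div_iff₀ (by positivity)]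
  rw [mul_comm #S c] at key
  exact_mod_cast key.trans_eq (by ring)

theorem choose_mul_choose_mul_div_pow_le {n s : ℕ} (hs : 1 ≤ s) (hsn : 2 * s ≤ n) :
    (n.choose s : ℝ) * ((20 * s).choose (18 * s) * ((s : ℝ) / n) ^ (18 * s)) ≤ 1 / n ^ 2 := by
  have hn : (0 : ℝ) < n := by norm_cast; omega
  set p : ℝ := s / n with hp
  have hp0 : 0 < p := by positivity
  have hhalf : p ≤ 1 / 2 := by
    rw [hp, div_le_iff₀ hn]; have : (2 * s : ℝ) ≤ n := by exact_mod_cast hsn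
    linarith
  have he : Real.exp 1 ≤ 3 := (Real.exp_one_lt_d9.trans (by norm_num)).le
  have hconst : 100 * Real.exp 1 ^ 3 * p ^ 15 ≤ 1 :=
    calc 100 * Real.exp 1 ^ 3 * p ^ 15 ≤ 100 * 3 ^ 3 * (1 / 2) ^ 15 := by gcongr
      _ ≤ 1 := by norm_num
  have hsymm : (20 * s).choose (18 * s) = (20 * s).choose (2 * s) :=
    Nat.choose_symm_of_eq_add (by ring)
  calc (n.choose s : ℝ) * ((20 * s).choose (18 * s) * p ^ (18 * s))
      ≤ (Real.exp 1 * n / s) ^ s * ((Real.exp 1 * (20 * s : ℕ) / (2 * s : ℕ)) ^ (2 * s)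
          * p ^ (18 * s)) := by
        rw [hsymm]
        gcongr
        exacts [Nat.choose_le_exp_one_mul_div_pow _ _, Nat.choose_le_exp_one_mul_div_pow _ _]
    _ = (Real.exp 1 / p) ^ s * ((10 * Real.exp 1) ^ (2 * s) * p ^ (18 * s)) := by
        congr 2
        · rw [hp]; field_simp
        · push_cast; field_simp; ring
    _ = (100 * Real.exp 1 ^ 3 * p ^ 15 * p ^ 2) ^ s := by
        rw [pow_mul, pow_mul, ← mul_pow, ← mul_pow]; congr 1; field_simp; ring
    _ = (100 * Real.exp 1 ^ 3 * p ^ 15) ^ s * (p ^ s) ^ 2 := by ring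
    _ ≤ 1 * (1 / n) ^ 2 := by
        gcongr
        · exact pow_le_one₀ (by positivity) hconst
        · exact div_pow_self_le_one_div hs hsn
    _ = 1 / n ^ 2 := by ring

theorem card_exists_dense_subset_le (n : ℕ) :
    (#{T : Fin n × Fin 20 → Fin n |
        ∃ S : Finset (Fin n), S.Nonempty ∧ 2 * #S ≤ n ∧ 18 * #S ≤ insideCount T S} : ℝ)
      ≤ n ^ (n * 20) / n := by
  rcases Nat.eq_zero_or_pos n with rfl | hn
  · simp
  set tail : Finset (Fin n) → Finset (Fin n × Fin 20 → Fin n) :=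
    fun S => {T | 18 * #S ≤ insideCount T S}
  have hsub : ({T | ∃ S : Finset (Fin n), S.Nonempty ∧ 2 * #S ≤ n ∧ 18 * #S ≤ insideCount T S} :
      Finset (Fin n × Fin 20 → Fin n))
      ⊆ (Icc 1 (n / 2)).biUnion fun s => (powersetCard s univ).biUnion tail := by
    intro T hT
    obtain ⟨S, hSne, hSn, hST⟩ := (mem_filter.1 hT).2
    simp only [mem_biUnion, mem_Icc, mem_powersetCard_univ]
    exact ⟨#S, ⟨hSne.card_pos, by omega⟩, S, rfl, mem_filter.2 ⟨mem_univ _, hST⟩⟩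
  have hcard := (card_le_card hsub).trans
    (card_biUnion_le.trans (sum_le_sum fun _ _ => card_biUnion_le))
  calc _ ≤ ∑ s ∈ Icc 1 (n / 2), ∑ S ∈ powersetCard s univ, (#(tail S) : ℝ) := by
        exact_mod_cast hcard
    _ ≤ ∑ s ∈ Icc 1 (n / 2), ∑ _S ∈ powersetCard s (univ : Finset (Fin n)),
          (n : ℝ) ^ (n * 20) * ((20 * s).choose (18 * s) * ((s : ℝ) / n) ^ (18 * s)) := by
        gcongr with s hs S hS
        rw [← mem_powersetCard_univ.1 hS]
        exact card_filter_le_insideCount_le hn.ne' 20 (18 * #S) S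
    _ = ∑ s ∈ Icc 1 (n / 2), (n : ℝ) ^ (n * 20)
          * (n.choose s * ((20 * s).choose (18 * s) * ((s : ℝ) / n) ^ (18 * s))) := by
        simp only [sum_const, card_powersetCard, card_univ, Fintype.card_fin, nsmul_eq_mul]
        exact sum_congr rfl fun _ _ => by ring
    _ ≤ ∑ _s ∈ Icc 1 (n / 2), (n : ℝ) ^ (n * 20) * (1 / n ^ 2) := by
        gcongr with s hs
        exact choose_mul_choose_mul_div_pow_le (mem_Icc.1 hs).1 (by have := (mem_Icc.1 hs).2; omega)
    _ ≤ n * ((n : ℝ) ^ (n * 20) * (1 / n ^ 2)) := by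
        rw [sum_const, Nat.card_Icc, nsmul_eq_mul]
        gcongr
        exact_mod_cast (show n / 2 + 1 - 1 ≤ n by omega)
    _ = n ^ (n * 20) / n := by field_simp

theorem stmt10_general (Φ : ℝ) (hΦ1 : Φ ≤ 1 / 10) :
    ∃ c : ℕ, 1 ≤ c ∧ ∃ N₀ : ℕ, ∀ n : ℕ, N₀ ≤ n →
      (1 - 1 / (n : ℝ)) * (Nat.card ((Fin n × Fin c) → Fin n) : ℝ)
        ≤ (Nat.card {T : (Fin n × Fin c) → Fin n //
            ∀ S : Finset (Fin n), S.Nonempty → (S.card : ℝ) ≤ (n : ℝ) / 2 →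
              ((Finset.univ.filter
                  (fun q : Fin n × Fin c => q.1 ∈ S ∧ T q ∈ S)).card : ℝ)
                ≤ (1 - Φ) * (c : ℝ) * (S.card : ℝ)} : ℝ) := by
  refine ⟨20, by norm_num, 0, fun n _ => ?_⟩
  set Good : (Fin n × Fin 20 → Fin n) → Prop := fun T =>
    ∀ S : Finset (Fin n), S.Nonempty → (#S : ℝ) ≤ n / 2 →
      (insideCount T S : ℝ) ≤ (1 - Φ) * (20 : ℕ) * #S
  have hbad : ∀ T ∈ (univ : Finset (Fin n × Fin 20 → Fin n)), ¬ Good T →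
      ∃ S : Finset (Fin n), S.Nonempty ∧ 2 * #S ≤ n ∧ 18 * #S ≤ insideCount T S := by
    intro T _ hT
    simp only [Good, not_forall, not_le] at hT
    obtain ⟨S, hSne, hSn, hST⟩ := hT
    refine ⟨S, hSne, by exact_mod_cast (by linarith : (2 * #S : ℝ) ≤ n), ?_⟩
    have : (18 * #S : ℝ) ≤ (1 - Φ) * (20 : ℕ) * #S := by push_cast; nlinarith
    exact_mod_cast (this.trans hST.le)
  have hsplit : (#{T | Good T} : ℝ) + #{T | ¬ Good T} = n ^ (n * 20) := by
    have := card_filter_add_card_filter_not (s := (univ : Finset (Fin n × Fin 20 → Fin n))) Good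
    rw [card_univ, Fintype.card_fun, Fintype.card_prod, Fintype.card_fin, Fintype.card_fin] at this
    exact_mod_cast this
  have hle : (#{T | ¬ Good T} : ℝ) ≤ n ^ (n * 20) / n :=
    (Nat.cast_le.2 (card_le_card (monotone_filter_right univ hbad))).trans
      (card_exists_dense_subset_le n)
  rw [Nat.card_eq_fintype_card, Nat.card_eq_fintype_card, Fintype.card_subtype, Fintype.card_fun,
    Fintype.card_prod, Fintype.card_fin, Fintype.card_fin]
  change _ ≤ ((#{T | Good T} : ℕ) : ℝ)
  push_cast
  linarith [one_sub_mul (1 / (n : ℝ)) (n ^ (n * 20)), one_div_mul_eq_div (n : ℝ) (n ^ (n * 20))]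

/-- Fix a real constant `Φ` with `0 < Φ ≤ 1/10`. There exist an
integer `c ≥ 1` and a threshold `N₀` such that for every `n ≥ N₀` the following holds.
Consider the uniform probability space of all maps `T : Fin n × Fin c → Fin n`
(equivalently: each vertex `v` independently picks `c` uniformly random targets
`T(v,1), …, T(v,c)`; the uniform measure on the function space is exactly the product of
`n·c` copies of the uniform distribution on `Fin n`). Then with probability at
least `1 − 1/n` — i.e. for at least a `(1 − 1/n)`-fraction of all such maps `T` — every
nonempty subset `S ⊆ Fin n` with `|S| ≤ n/2` satisfies: the number of pairs `(v, j)` with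
`v ∈ S` and `T(v,j) ∈ S` is at most `(1−Φ)·c·|S|`. -/
theorem stmt10 (Φ : ℝ) (hΦ0 : 0 < Φ) (hΦ1 : Φ ≤ 1 / 10) :
    ∃ c : ℕ, 1 ≤ c ∧ ∃ N₀ : ℕ, ∀ n : ℕ, N₀ ≤ n →
      (1 - 1 / (n : ℝ)) * (Nat.card ((Fin n × Fin c) → Fin n) : ℝ)
        ≤ (Nat.card {T : (Fin n × Fin c) → Fin n //
            ∀ S : Finset (Fin n), S.Nonempty → (S.card : ℝ) ≤ (n : ℝ) / 2 →
              ((Finset.univ.filter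
                  (fun q : Fin n × Fin c => q.1 ∈ S ∧ T q ∈ S)).card : ℝ)
                ≤ (1 - Φ) * (c : ℝ) * (S.card : ℝ)} : ℝ) :=
  stmt10_general Φ hΦ1
end
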